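/- If X is a mutual-visibility set (respectively outer, dual, or total mutual-visibility set) of a graph G and x ∈ X, then X \ {x} is a mutual-visibility set (respectively outer, dual, or total mutual-visibility set) of G − x. -/

import Mathlib

namespace MutualVisibility

open SimpleGraph

variable {V W : Type*}

/-- `x` and `y` are `X`-visible in `G`: there is a shortest `x,y`-path all of whose
internal vertices avoid `X`. -/
def Visible (G : SimpleGraph V) (X : Set V) (x y : V) : Prop :=
  ∃ p : G.Walk x y, p.length = G.dist x y ∧ ∀ v ∈ p.support, v ≠ x → v ≠ y → v ∉ X

/-- `X` is a mutual-visibility set: any two vertices of `X` are `X`-visible. -/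
def IsMutualVisSet (G : SimpleGraph V) (X : Set V) : Prop :=
  ∀ x ∈ X, ∀ y ∈ X, Visible G X x y

/-- outer mutual-visibility set -/
def IsOuterMutualVisSet (G : SimpleGraph V) (X : Set V) : Prop :=
  IsMutualVisSet G X ∧ ∀ x ∈ X, ∀ y ∉ X, Visible G X x y

/-- dual mutual-visibility set -/
def IsDualMutualVisSet (G : SimpleGraph V) (X : Set V) : Prop :=
  IsMutualVisSet G X ∧ ∀ x ∉ X, ∀ y ∉ X, Visible G X x y

/-- total mutual-visibility set -/
def IsTotalMutualVisSet (G : SimpleGraph V) (X : Set V) : Prop :=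
  ∀ x y : V, Visible G X x y

/-- mutual-visibility number μ(G) -/
noncomputable def mu (G : SimpleGraph V) : ℕ :=
  sSup {k | ∃ X : Set V, IsMutualVisSet G X ∧ X.ncard = k}

/-- outer mutual-visibility number μ_o(G) -/
noncomputable def muOuter (G : SimpleGraph V) : ℕ :=
  sSup {k | ∃ X : Set V, IsOuterMutualVisSet G X ∧ X.ncard = k}

/-- dual mutual-visibility number μ_d(G) -/
noncomputable def muDual (G : SimpleGraph V) : ℕ :=
  sSup {k | ∃ X : Set V, IsDualMutualVisSet G X ∧ X.ncard = k}

/-- total mutual-visibility number μ_t(G) -/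
noncomputable def muTotal (G : SimpleGraph V) : ℕ :=
  sSup {k | ∃ X : Set V, IsTotalMutualVisSet G X ∧ X.ncard = k}

/-- `H` contains a subgraph copy of `F`. -/
def ContainsCopy (F : SimpleGraph W) (H : SimpleGraph V) : Prop :=
  ∃ f : W → V, Function.Injective f ∧ ∀ a b, F.Adj a b → H.Adj (f a) (f b)

/-- The Turán number ex(n; F): max number of edges of an `n`-vertex graph with no copy of `F`. -/
noncomputable def exNum (n : ℕ) (F : SimpleGraph W) : ℕ :=
  sSup {k | ∃ H : SimpleGraph (Fin n), ¬ ContainsCopy F H ∧ H.edgeSet.ncard = k}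

/-- The direct (tensor/categorical) product of graphs. -/
def directProd (G : SimpleGraph V) (H : SimpleGraph W) : SimpleGraph (V × W) where
  Adj x y := G.Adj x.1 y.1 ∧ H.Adj x.2 y.2
  symm := ⟨fun _ _ h => ⟨h.1.symm, h.2.symm⟩⟩
  loopless := ⟨fun x h => G.irrefl h.1⟩

/-- The join `G + H` of two graphs. -/
def graphJoin (G : SimpleGraph V) (H : SimpleGraph W) : SimpleGraph (V ⊕ W) where
  Adj u v := match u, v with
    | Sum.inl a, Sum.inl b => G.Adj a b
    | Sum.inr a, Sum.inr b => H.Adj a b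
    | _, _ => True
  symm := ⟨fun u v => match u, v with
    | Sum.inl _, Sum.inl _ => fun h => G.adj_symm h
    | Sum.inr _, Sum.inr _ => fun h => H.adj_symm h
    | Sum.inl _, Sum.inr _ => fun _ => trivial
    | Sum.inr _, Sum.inl _ => fun _ => trivial⟩
  loopless := ⟨fun u => match u with
    | Sum.inl a => G.irrefl (v := a)
    | Sum.inr a => H.irrefl (v := a)⟩

/-- A big-μ graph: `G = (K_1 ∪ K_t) + H` for some `t ≥ 0` and some graph `H`. -/
def IsBigMu {V : Type} (G : SimpleGraph V) : Prop :=
  ∃ (t : ℕ) (W : Type) (H : SimpleGraph W),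
    Nonempty (G ≃g graphJoin ((⊤ : SimpleGraph (Fin 1)) ⊕g (⊤ : SimpleGraph (Fin t))) H)

/-- A cograph: a graph with no induced path on four vertices. -/
def IsCograph (G : SimpleGraph V) : Prop :=
  ¬ ∃ f : Fin 4 → V, Function.Injective f ∧
      ∀ a b, (pathGraph 4).Adj a b ↔ G.Adj (f a) (f b)

/-- The Petersen graph, realized as the Kneser graph K(5,2). -/
def petersen : SimpleGraph {s : Finset (Fin 5) // s.card = 2} where
  Adj a b := Disjoint a.1 b.1
  symm := ⟨fun _ _ h => h.symm⟩
  loopless := by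
    constructor
    rintro ⟨s, hs⟩ h
    rw [disjoint_self, Finset.bot_eq_empty] at h
    subst h
    simp at hs

section InducedWalks

variable {V' : Type*} {G : SimpleGraph V} {G' : SimpleGraph V'}

theorem _root_.SimpleGraph.Reachable.dist_map_le (f : G →g G') {u v : V} (hr : G.Reachable u v) :
    G'.dist (f u) (f v) ≤ G.dist u v := by
  obtain ⟨p, hp⟩ := hr.exists_walk_length_eq_dist
  rw [← hp, ← Walk.length_map f]
  exact dist_le _

@[simp]
theorem _root_.SimpleGraph.Walk.length_induce {s : Set V} {u v : V} (p : G.Walk u v)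
    (hp : ∀ w ∈ p.support, w ∈ s) :
    (p.induce s hp).length = p.length := by
  induction p with
  | nil => rfl
  | cons _ _ ih => simp [ih]

theorem _root_.SimpleGraph.Walk.length_induce_eq_dist {s : Set V} {u v : V} (p : G.Walk u v)
    (hp : ∀ w ∈ p.support, w ∈ s) (hlen : p.length = G.dist u v) :
    (p.induce s hp).length =
      (G.induce s).dist ⟨u, hp u p.start_mem_support⟩ ⟨v, hp v p.end_mem_support⟩ := by
  have hupper := dist_le (p.induce s hp)
  have hlower := (Walk.reachable (p.induce s hp)).dist_map_le (Embedding.induce s).toHom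
  simp only [Walk.length_induce] at hupper ⊢
  exact le_antisymm (hlen ▸ hlower) hupper

end InducedWalks

section InducedVisibility

variable {G : SimpleGraph V} {X s : Set V}

/-- A shortest path whose internal vertices avoid `X` never leaves `s ⊇ Xᶜ` (its ends lie
in `s`), so it survives in `G[s]`, where it is still shortest because distances cannot drop. -/
theorem Visible.induce (hs : sᶜ ⊆ X) {u v : s} (h : Visible G X u v) :
    Visible (G.induce s) (Subtype.val ⁻¹' X) u v := by
  obtain ⟨p, hlen, havoid⟩ := h
  have hsupp : ∀ w ∈ p.support, w ∈ s := fun w hw => by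
    by_contra hws
    exact havoid w hw (fun h => hws (h ▸ u.2)) (fun h => hws (h ▸ v.2)) (hs hws)
  refine ⟨p.induce s hsupp, p.length_induce_eq_dist hsupp hlen, fun w hw hwu hwv => ?_⟩
  rw [Walk.support_induce, List.mem_attachWith] at hw
  exact havoid w hw (Subtype.coe_ne_coe.mpr hwu) (Subtype.coe_ne_coe.mpr hwv)

theorem IsMutualVisSet.induce (hs : sᶜ ⊆ X) (h : IsMutualVisSet G X) :
    IsMutualVisSet (G.induce s) (Subtype.val ⁻¹' X) :=
  fun u hu v hv => (h u hu v hv).induce hs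

theorem IsOuterMutualVisSet.induce (hs : sᶜ ⊆ X) (h : IsOuterMutualVisSet G X) :
    IsOuterMutualVisSet (G.induce s) (Subtype.val ⁻¹' X) :=
  ⟨h.1.induce hs, fun u hu v hv => (h.2 u hu v hv).induce hs⟩

theorem IsDualMutualVisSet.induce (hs : sᶜ ⊆ X) (h : IsDualMutualVisSet G X) :
    IsDualMutualVisSet (G.induce s) (Subtype.val ⁻¹' X) :=
  ⟨h.1.induce hs, fun u hu v hv => (h.2 u hu v hv).induce hs⟩

theorem IsTotalMutualVisSet.induce (hs : sᶜ ⊆ X) (h : IsTotalMutualVisSet G X) :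
    IsTotalMutualVisSet (G.induce s) (Subtype.val ⁻¹' X) :=
  fun u v => (h u v).induce hs

end InducedVisibility

theorem mv_set_delete_vertex {V : Type*} (G : SimpleGraph V) (X : Set V) (x : V) (hx : x ∈ X) :
    (IsMutualVisSet G X →
      IsMutualVisSet (G.induce {y | y ≠ x})
        {u : ({y | y ≠ x} : Set V) | (u : V) ∈ X}) ∧
    (IsOuterMutualVisSet G X →
      IsOuterMutualVisSet (G.induce {y | y ≠ x})
        {u : ({y | y ≠ x} : Set V) | (u : V) ∈ X}) ∧
    (IsDualMutualVisSet G X →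
      IsDualMutualVisSet (G.induce {y | y ≠ x})
        {u : ({y | y ≠ x} : Set V) | (u : V) ∈ X}) ∧
    (IsTotalMutualVisSet G X →
      IsTotalMutualVisSet (G.induce {y | y ≠ x})
        {u : ({y | y ≠ x} : Set V) | (u : V) ∈ X}) := by
  have hs : {y | y ≠ x}ᶜ ⊆ X := fun y hy => (not_not.mp hy) ▸ hx
  exact ⟨(·.induce hs), (·.induce hs), (·.induce hs), (·.induce hs)⟩
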